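/- Let M : H(n) → ℝ^m be an r-complete measurement with nontrivial kernel. Then every nonzero Z ∈ Ker(M) satisfies λ_{n−r}(Z) < 0; consequently κ := −max{λ_{n−r}(Z) : Z ∈ Ker(M), ‖Z‖₂ = 1} is well defined (the maximum is attained) and κ > 0. -/

import Mathlib

open Matrix
open scoped ComplexOrder

noncomputable section

/-- The Frobenius norm `‖X‖₂` of a complex matrix. -/
def frobNorm {n : ℕ} (X : Matrix (Fin n) (Fin n) ℂ) : ℝ :=
  Real.sqrt (∑ i, ∑ j, Complex.normSq (X i j))

def rComplete {n : ℕ} {ι : Type*} [Fintype ι]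
    (M : Matrix (Fin n) (Fin n) ℂ →ₗ[ℝ] EuclideanSpace ℝ ι) (r : ℕ) : Prop :=
  ∀ X X' : Matrix (Fin n) (Fin n) ℂ, X.PosSemidef → X.rank ≤ r → X'.PosSemidef →
    X ≠ X' → M X ≠ M X'

/-- The eigenvalues of a Hermitian matrix listed in decreasing order (with multiplicity);
`eigenvaluesDesc hZ i` is `λ_{i+1}(Z)` in the paper's (1-based) notation. -/
noncomputable def eigenvaluesDesc {n : ℕ} {Z : Matrix (Fin n) (Fin n) ℂ}
    (hZ : Z.IsHermitian) : Fin n → ℝ :=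
  fun i => hZ.eigenvalues (Tuple.sort hZ.eigenvalues i.rev)

/-!
A nonzero Hermitian `Z ∈ Ker M` splits as `Z = Z₊ - Z₋` with `Z₊, Z₋ ⪰ 0` and `M Z₊ = M Z₋`;
`r`-completeness then forces `rank Z₋ > r`, i.e. `Z` has more than `r` negative eigenvalues,
which says exactly `λ_{n-r}(Z) < 0`.

For the maximum, parametrise the unit sphere of the kernel by pairs `(V, w)` with `V` unitary,
`w` antitone and `Z = V diag(w) Vᴴ`. These pairs form a compact set, on which `(V, w) ↦ w_k` is
continuous, and `w` is the ordered spectrum of `Z` because both are the roots of the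
characteristic polynomial.
-/

open Finset Polynomial
open scoped Matrix.Norms.Frobenius

section UnitaryConj

variable {𝕜 ι : Type*} [RCLike 𝕜] [Fintype ι] [DecidableEq ι] {V : Matrix ι ι 𝕜}

lemma rank_mul_diagonal_mul_conjTranspose (hV : V ∈ unitaryGroup ι 𝕜) (d : ι → 𝕜) :
    (V * diagonal d * Vᴴ).rank = Fintype.card {i // d i ≠ 0} := by
  have hVdet : IsUnit V.det := isUnit_det_of_left_inverse (mem_unitaryGroup_iff'.mp hV)
  have hVHdet : IsUnit Vᴴ.det := isUnit_det_of_right_inverse (mem_unitaryGroup_iff'.mp hV)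
  rw [rank_mul_eq_left_of_isUnit_det _ _ hVHdet, rank_mul_eq_right_of_isUnit_det _ _ hVdet,
    rank_diagonal]

lemma charpoly_mul_diagonal_mul_conjTranspose (hV : V ∈ unitaryGroup ι 𝕜) (d : ι → 𝕜) :
    (V * diagonal d * Vᴴ).charpoly = ∏ i, (X - C (d i)) := by
  rw [charpoly_mul_comm, ← mul_assoc, ← star_eq_conjTranspose, mem_unitaryGroup_iff'.mp hV,
    one_mul, charpoly_diagonal]

lemma frobenius_norm_sq_eq_re_trace (X : Matrix ι ι 𝕜) :
    ‖X‖ ^ 2 = RCLike.re (trace (Xᴴ * X)) := by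
  rw [frobenius_norm_def, ← Real.sqrt_eq_rpow, Real.sq_sqrt (by positivity), Finset.sum_comm]
  simp only [trace, Matrix.diag, mul_apply, conjTranspose_apply, RCLike.star_def, RCLike.conj_mul,
    map_sum, Real.rpow_two]
  norm_cast

lemma frobenius_norm_mul_mul_conjTranspose (hV : V ∈ unitaryGroup ι 𝕜) (X : Matrix ι ι 𝕜) :
    ‖V * X * Vᴴ‖ = ‖X‖ := by
  have hVV : Vᴴ * V = 1 := by rw [← star_eq_conjTranspose]; exact mem_unitaryGroup_iff'.mp hV
  refine (pow_left_inj₀ (norm_nonneg _) (norm_nonneg _) two_ne_zero).mp ?_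
  have : (V * X * Vᴴ)ᴴ * (V * X * Vᴴ) = V * (Xᴴ * X) * Vᴴ := by
    simp only [conjTranspose_mul, conjTranspose_conjTranspose, Matrix.mul_assoc,
      ← Matrix.mul_assoc Vᴴ V, hVV, Matrix.one_mul]
  rw [frobenius_norm_sq_eq_re_trace, frobenius_norm_sq_eq_re_trace, this, trace_mul_cycle, hVV,
    Matrix.one_mul]

lemma frobenius_norm_of_mem_unitaryGroup (hV : V ∈ unitaryGroup ι 𝕜) :
    ‖V‖ = √(Fintype.card ι) := by
  rw [← Real.sqrt_sq (norm_nonneg V), frobenius_norm_sq_eq_re_trace, ← star_eq_conjTranspose,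
    mem_unitaryGroup_iff'.mp hV, trace_one]
  simp

end UnitaryConj

variable {n : ℕ}

lemma frobNorm_eq_norm (X : Matrix (Fin n) (Fin n) ℂ) : frobNorm X = ‖X‖ := by
  rw [frobNorm, frobenius_norm_def, Real.sqrt_eq_rpow]
  simp only [Complex.normSq_eq_norm_sq, Real.rpow_two]

lemma Antitone.eq_of_map_univ_val_eq {α : Type*} [LinearOrder α] {u w : Fin n → α}
    (hu : Antitone u) (hw : Antitone w) (h : univ.val.map u = univ.val.map w) : u = w := by
  rw [Fin.univ_val_map, Fin.univ_val_map, Multiset.coe_eq_coe] at h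
  exact List.ofFn_injective (h.eq_of_sortedGE hu.sortedGE_ofFn hw.sortedGE_ofFn)

section EigenvaluesDesc

variable {Z : Matrix (Fin n) (Fin n) ℂ} (hZ : Z.IsHermitian)

lemma eigenvaluesDesc_eq_comp :
    eigenvaluesDesc hZ = hZ.eigenvalues ∘ Fin.revPerm.trans (Tuple.sort hZ.eigenvalues) :=
  rfl

lemma eigenvaluesDesc_antitone : Antitone (eigenvaluesDesc hZ) :=
  fun _ _ hij ↦ Tuple.monotone_sort hZ.eigenvalues (Fin.rev_le_rev.mpr hij)

lemma Matrix.IsHermitian.exists_eq_mul_diagonal_eigenvaluesDesc :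
    ∃ V ∈ unitaryGroup (Fin n) ℂ, Z = V * diagonal (fun i ↦ (eigenvaluesDesc hZ i : ℂ)) * Vᴴ := by
  set σ : Equiv.Perm (Fin n) := Fin.revPerm.trans (Tuple.sort hZ.eigenvalues)
  set U : Matrix (Fin n) (Fin n) ℂ := (hZ.eigenvectorUnitary : Matrix (Fin n) (Fin n) ℂ)
  refine ⟨U.submatrix id σ, ?_, ?_⟩
  · rw [mem_unitaryGroup_iff', star_eq_conjTranspose, conjTranspose_submatrix, ← Equiv.coe_refl,
      submatrix_mul_equiv, ← star_eq_conjTranspose,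
      mem_unitaryGroup_iff'.mp hZ.eigenvectorUnitary.2, submatrix_one_equiv]
  · have hd : (fun i ↦ (eigenvaluesDesc hZ i : ℂ)) = (RCLike.ofReal ∘ hZ.eigenvalues) ∘ σ := rfl
    conv_lhs => rw [hZ.spectral_theorem, Unitary.conjStarAlgAut_apply]
    rw [hd, ← submatrix_diagonal_equiv, conjTranspose_submatrix, submatrix_mul_equiv,
      submatrix_mul_equiv, submatrix_id_id, star_eq_conjTranspose]

lemma eigenvaluesDesc_eq_of_eq_mul_diagonal {V : Matrix (Fin n) (Fin n) ℂ}
    (hV : V ∈ unitaryGroup (Fin n) ℂ) {w : Fin n → ℝ} (hw : Antitone w)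
    (hZV : Z = V * diagonal (fun i ↦ (w i : ℂ)) * Vᴴ) :
    eigenvaluesDesc hZ = w := by
  refine (eigenvaluesDesc_antitone hZ).eq_of_map_univ_val_eq hw ?_
  have hroots : univ.val.map (RCLike.ofReal ∘ hZ.eigenvalues) =
      univ.val.map (RCLike.ofReal ∘ w : Fin n → ℂ) := by
    rw [← hZ.roots_charpoly_eq_eigenvalues, hZV, charpoly_mul_diagonal_mul_conjTranspose hV,
      roots_prod _ _ (prod_ne_zero_iff.mpr fun i _ ↦ X_sub_C_ne_zero _)]
    simp
  rw [← Multiset.map_map, ← Multiset.map_map] at hroots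
  rw [eigenvaluesDesc_eq_comp, ← Multiset.map_map, Multiset.map_univ_val_equiv]
  exact Multiset.map_injective RCLike.ofReal_injective hroots

end EigenvaluesDesc

section rComplete

variable {m r : ℕ} {M : Matrix (Fin n) (Fin n) ℂ →ₗ[ℝ] EuclideanSpace ℝ (Fin m)}

lemma rComplete.lt_card_neg (hM : rComplete M r) {Z V : Matrix (Fin n) (Fin n) ℂ}
    (hV : V ∈ unitaryGroup (Fin n) ℂ) {w : Fin n → ℝ}
    (hZV : Z = V * diagonal (fun i ↦ (w i : ℂ)) * Vᴴ) (hMZ : M Z = 0) (hZ0 : Z ≠ 0) :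
    r < #{i | w i < 0} := by
  set P := V * diagonal (fun i ↦ ((max (w i) 0 : ℝ) : ℂ)) * Vᴴ
  set N := V * diagonal (fun i ↦ ((max (-w i) 0 : ℝ) : ℂ)) * Vᴴ
  have hPN : Z = P - N := by
    rw [hZV, ← sub_mul, ← mul_sub, diagonal_sub]
    simp_rw [← Complex.ofReal_sub, max_zero_sub_max_neg_zero_eq_self]
  have hpsd (d : Fin n → ℝ) (hd : ∀ i, 0 ≤ d i) :
      (V * diagonal (fun i ↦ (d i : ℂ)) * Vᴴ).PosSemidef :=
    (PosSemidef.diagonal fun i ↦ Complex.zero_le_real.mpr (hd i)).mul_mul_conjTranspose_same V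
  have hrankN : N.rank = #{i | w i < 0} := by
    rw [rank_mul_diagonal_mul_conjTranspose hV, Fintype.card_subtype]
    congr 1
    ext i
    simp
  have hMNP : M N = M P := by
    rw [hPN, map_sub, sub_eq_zero] at hMZ
    exact hMZ.symm
  by_contra! hle
  have hNP : N = P := by_contra fun hne ↦ hM N P (hpsd _ fun _ ↦ le_max_right _ _)
    (hrankN ▸ hle) (hpsd _ fun _ ↦ le_max_right _ _) hne hMNP
  exact hZ0 (by rw [hPN, hNP, sub_self])

lemma rComplete.eigenvaluesDesc_lt_zero (hM : rComplete M r) {Z : Matrix (Fin n) (Fin n) ℂ}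
    (hZ : Z.IsHermitian) (hMZ : M Z = 0) (hZ0 : Z ≠ 0) {k : Fin n} (hk : n ≤ k + r + 1) :
    eigenvaluesDesc hZ k < 0 := by
  obtain ⟨V, hV, hZV⟩ := hZ.exists_eq_mul_diagonal_eigenvaluesDesc
  have hneg := hM.lt_card_neg hV hZV hMZ hZ0
  by_contra! hnonneg
  have hnonneg_card := (Tuple.lt_card_ge_iff_apply_ge_of_antitone
    (eigenvaluesDesc_antitone hZ)).mpr hnonneg
  have hsplit := card_filter_add_card_filter_not (s := univ) (fun i ↦ eigenvaluesDesc hZ i < 0)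
  simp only [not_lt, card_univ, Fintype.card_fin] at hsplit
  omega

end rComplete

def conjDiagonal (p : Matrix (Fin n) (Fin n) ℂ × (Fin n → ℝ)) : Matrix (Fin n) (Fin n) ℂ :=
  p.1 * diagonal (fun i ↦ (p.2 i : ℂ)) * p.1ᴴ

lemma continuous_conjDiagonal : Continuous (conjDiagonal (n := n)) := by
  refine (continuous_fst.matrix_mul ?_).matrix_mul continuous_fst.matrix_conjTranspose
  exact Continuous.matrix_diagonal <| continuous_pi fun i ↦
    Complex.continuous_ofReal.comp ((continuous_apply i).comp continuous_snd)

lemma isCompact_setOf_conjDiagonal_mem {S : Set (Matrix (Fin n) (Fin n) ℂ)} (hS : IsClosed S) :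
    IsCompact {p | p.1 ∈ unitaryGroup (Fin n) ℂ ∧ Antitone p.2 ∧ conjDiagonal p ∈ S ∧
      ‖conjDiagonal p‖ = 1} := by
  have := FiniteDimensional.proper_rclike ℝ (Matrix (Fin n) (Fin n) ℂ)
  refine ((isCompact_closedBall 0 √n).prod (isCompact_closedBall (0 : Fin n → ℝ) 1)
    ).of_isClosed_subset ?_ ?_
  · exact (isClosed_unitary.preimage continuous_fst).inter
      ((isClosed_antitone.preimage continuous_snd).inter
      ((hS.preimage continuous_conjDiagonal).inter
      (isClosed_eq (continuous_norm.comp continuous_conjDiagonal) continuous_const)))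
  · rintro ⟨V, w⟩ ⟨hV, -, -, hnorm⟩
    refine ⟨by simp [frobenius_norm_of_mem_unitaryGroup hV], ?_⟩
    rw [Metric.mem_closedBall, dist_zero_right, pi_norm_le_iff_of_nonneg zero_le_one]
    intro i
    rw [← hnorm, conjDiagonal, frobenius_norm_mul_mul_conjTranspose hV, frobenius_norm_diagonal,
      ← Complex.norm_real]
    exact PiLp.norm_apply_le (WithLp.toLp 2 fun i ↦ (w i : ℂ)) i

lemma exists_max_eigenvaluesDesc_on_unitSphere (S : Submodule ℝ (Matrix (Fin n) (Fin n) ℂ))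
    (hS : ∃ W ∈ S, W.IsHermitian ∧ W ≠ 0) (k : Fin n) :
    ∃ (Z₀ : Matrix (Fin n) (Fin n) ℂ) (hZ₀ : Z₀.IsHermitian), Z₀ ∈ S ∧ frobNorm Z₀ = 1 ∧
      ∀ (Z : Matrix (Fin n) (Fin n) ℂ) (hZ : Z.IsHermitian), Z ∈ S → frobNorm Z = 1 →
        eigenvaluesDesc hZ k ≤ eigenvaluesDesc hZ₀ k := by
  set K := {p | p.1 ∈ unitaryGroup (Fin n) ℂ ∧ Antitone p.2 ∧ conjDiagonal p ∈ S ∧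
    ‖conjDiagonal p‖ = 1}
  have hmem (Z : Matrix (Fin n) (Fin n) ℂ) (hZ : Z.IsHermitian) (hZS : Z ∈ S) (hZ1 : ‖Z‖ = 1) :
      ∃ V, (V, eigenvaluesDesc hZ) ∈ K := by
    obtain ⟨V, hV, hZV⟩ := hZ.exists_eq_mul_diagonal_eigenvaluesDesc
    have hconj : conjDiagonal (V, eigenvaluesDesc hZ) = Z := hZV.symm
    exact ⟨V, hV, eigenvaluesDesc_antitone hZ, by rwa [hconj], by rwa [hconj]⟩
  obtain ⟨W, hWS, hW, hW0⟩ := hS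
  obtain ⟨V, hWK⟩ := hmem _ (hW.smul (IsSelfAdjoint.all ‖W‖⁻¹)) (S.smul_mem _ hWS)
    (by rw [norm_smul, norm_inv, norm_norm, inv_mul_cancel₀ (norm_ne_zero_iff.mpr hW0)])
  obtain ⟨⟨V₀, w₀⟩, ⟨hV₀, hw₀, hS₀, hnorm₀⟩, hmax⟩ :=
    (isCompact_setOf_conjDiagonal_mem S.closed_of_finiteDimensional).exists_isMaxOn ⟨_, hWK⟩
      ((continuous_apply k).comp continuous_snd).continuousOn
  have hZ₀ : (conjDiagonal (V₀, w₀)).IsHermitian :=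
    isHermitian_mul_mul_conjTranspose V₀ (isHermitian_diagonal_of_self_adjoint _
      (funext fun i ↦ Complex.conj_ofReal (w₀ i)))
  refine ⟨_, hZ₀, hS₀, (frobNorm_eq_norm _).trans hnorm₀, fun Z hZ hZS hZ1 ↦ ?_⟩
  rw [eigenvaluesDesc_eq_of_eq_mul_diagonal hZ₀ hV₀ hw₀ rfl]
  obtain ⟨V, hZK⟩ := hmem Z hZ hZS (frobNorm_eq_norm Z ▸ hZ1)
  exact hmax hZK

/-- if `M` is `r`-complete with nontrivial kernel, every nonzero Hermitian
`Z ∈ Ker M` has `λ_{n−r}(Z) < 0`; moreover the maximum of `λ_{n−r}` over the unit sphere of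
the kernel is attained and `κ := −max` is positive. -/
theorem stmt12 {n m r : ℕ} (hrn : r < n)
    (M : Matrix (Fin n) (Fin n) ℂ →ₗ[ℝ] EuclideanSpace ℝ (Fin m))
    (hM : rComplete M r)
    (hker : ∃ Z : Matrix (Fin n) (Fin n) ℂ, Z.IsHermitian ∧ M Z = 0 ∧ Z ≠ 0) :
    (∀ (Z : Matrix (Fin n) (Fin n) ℂ) (hZ : Z.IsHermitian), M Z = 0 → Z ≠ 0 →
        eigenvaluesDesc hZ ⟨n - r - 1, by omega⟩ < 0) ∧
    ∃ (Z₀ : Matrix (Fin n) (Fin n) ℂ) (hZ₀ : Z₀.IsHermitian),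
      M Z₀ = 0 ∧ frobNorm Z₀ = 1 ∧
      (∀ (Z : Matrix (Fin n) (Fin n) ℂ) (hZ : Z.IsHermitian), M Z = 0 → frobNorm Z = 1 →
        eigenvaluesDesc hZ ⟨n - r - 1, by omega⟩ ≤
          eigenvaluesDesc hZ₀ ⟨n - r - 1, by omega⟩) ∧
      0 < -eigenvaluesDesc hZ₀ ⟨n - r - 1, by omega⟩ := by
  have hneg (Z : Matrix (Fin n) (Fin n) ℂ) (hZ : Z.IsHermitian) (hMZ : M Z = 0) (hZ0 : Z ≠ 0) :
      eigenvaluesDesc hZ ⟨n - r - 1, by omega⟩ < 0 :=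
    hM.eigenvaluesDesc_lt_zero hZ hMZ hZ0 (by simp only; omega)
  obtain ⟨W, hW, hMW, hW0⟩ := hker
  obtain ⟨Z₀, hZ₀, hMZ₀, hnorm₀, hmax⟩ := exists_max_eigenvaluesDesc_on_unitSphere
    (LinearMap.ker M) ⟨W, hMW, hW, hW0⟩ ⟨n - r - 1, by omega⟩
  have hZ₀0 : Z₀ ≠ 0 := by
    rintro rfl
    simp [frobNorm_eq_norm] at hnorm₀
  exact ⟨hneg, Z₀, hZ₀, hMZ₀, hnorm₀, fun Z hZ hMZ ↦ hmax Z hZ hMZ,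
    neg_pos.mpr (hneg Z₀ hZ₀ hMZ₀ hZ₀0)⟩
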